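/- Let α ∈ (0,2) and suppose γ satisfies γ(cx) = c^{−α}γ(x) for c > 0. Define E_H(γ) = sup_{g∈G}{ ∬γ(x−y)g²(x)g²(y)dxdy − ∫|∇g|²dx } and M(γ) = sup_{g∈G}{ (∬γ(x−y)g²(x)g²(y)dxdy)^{1/2} − (1/2)∫|∇g|²dx }, where G = {g ∈ W^{1,2}(ℝ^ℓ) : ‖g‖_{L²}=1}. Then E_H(γ) is finite if and only if M(γ) is finite, and in that case M(γ) = ((4−α)/4) ( 2 E_H(γ)/(2−α) )^{(2−α)/(4−α)}. -/

import Mathlib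

/-!
The dilation `g ↦ c ^ (d / 2) • g (c • ·)` maps `G` to itself and multiplies the interaction term
`A` by `c ^ α` and the kinetic term `B` by `c ^ 2`. Hence `E_H ≥ A - B` on `G` means
`E_H ≥ max_{c > 0} (c ^ α A - c ^ 2 B)`, which bounds `A` by a multiple of
`E_H ^ ((2 - α) / 2) B ^ (α / 2)`; likewise `M ≥ max_{c > 0} (c ^ (α / 2) √A - c ^ 2 B / 2)`
bounds `√A` by a multiple of `M ^ ((4 - α) / 4) B ^ (α / 4)`. Weighted AM-GM turns the first
bound into `√A - B / 2 ≤ Φ(E_H)` and the second into `A - B ≤ Φ⁻¹(M)`, where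
`Φ(E) = ((4 - α) / 4) (2 E / (2 - α)) ^ ((2 - α) / (4 - α))`; so the two suprema are finite
together and `M = Φ(E_H)`.
-/

open MeasureTheory Set Real
open Filter Topology Module
open scoped ENNReal

namespace Real

variable {p q a b E : ℝ}

theorem tendsto_rpow_mul_sub_rpow_mul_nhdsGT_zero (hp : 0 < p) (hq : 0 < q) :
    Tendsto (fun c : ℝ => c ^ p * a - c ^ q * b) (𝓝[>] 0) (𝓝 0) := by
  have hcont : ContinuousAt (fun c : ℝ => c ^ p * a - c ^ q * b) 0 :=
    ((continuousAt_rpow_const 0 p (Or.inr hp.le)).mul continuousAt_const).sub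
      ((continuousAt_rpow_const 0 q (Or.inr hq.le)).mul continuousAt_const)
  simpa [zero_rpow hp.ne', zero_rpow hq.ne'] using hcont.tendsto.mono_left nhdsWithin_le_nhds

theorem nonneg_of_forall_rpow_mul_sub_le (hp : 0 < p) (hq : 0 < q)
    (h : ∀ c > 0, c ^ p * a - c ^ q * b ≤ E) : 0 ≤ E :=
  le_of_tendsto (tendsto_rpow_mul_sub_rpow_mul_nhdsGT_zero hp hq)
    (eventually_nhdsWithin_of_forall h)

theorem nonpos_of_forall_rpow_mul_le (hp : 0 < p) (h : ∀ c > 0, c ^ p * a ≤ E) : a ≤ 0 := by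
  by_contra! ha
  obtain ⟨c, hcE, hc⟩ := (((tendsto_rpow_atTop hp).atTop_mul_const ha).eventually_gt_atTop E
    |>.and (eventually_gt_atTop 0)).exists
  exact (h c hc).not_gt hcE

theorem nonpos_of_forall_rpow_mul_le_rpow_mul (hp : 0 < p) (hpq : p < q)
    (h : ∀ c > 0, c ^ p * a ≤ c ^ q * b) : a ≤ 0 := by
  have hlim := tendsto_rpow_mul_sub_rpow_mul_nhdsGT_zero (a := b) (b := 0) (sub_pos.2 hpq) hp
  simp only [mul_zero, sub_zero] at hlim
  refine ge_of_tendsto hlim (eventually_nhdsWithin_of_forall fun c (hc : 0 < c) => ?_)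
  have hcp : 0 < c ^ p := rpow_pos_of_pos hc p
  rw [← mul_le_mul_iff_right₀ hcp, ← mul_assoc, ← rpow_add hc, add_sub_cancel]
  exact h c hc

/-- `E ≥ max_{c > 0} (c ^ p * a - c ^ q * b) = ((q - p) / q) (p / q) ^ (p / (q - p))
a ^ (q / (q - p)) b ^ (-p / (q - p))`, solved for `a`. -/
theorem le_of_forall_rpow_mul_sub_rpow_mul_le (hp : 0 < p) (hpq : p < q) (hb : 0 ≤ b)
    (h : ∀ c > 0, c ^ p * a - c ^ q * b ≤ E) :
    a ≤ (q * E / (q - p)) ^ ((q - p) / q) * (q * b / p) ^ (p / q) := by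
  have hq : 0 < q := hp.trans hpq
  have hqp : 0 < q - p := sub_pos.2 hpq
  have hE : 0 ≤ E := nonneg_of_forall_rpow_mul_sub_le hp hq h
  rcases le_or_gt a 0 with ha | ha
  · exact ha.trans (by positivity)
  have hb_pos : 0 < b := by
    refine hb.lt_of_ne' fun hb0 =>
      ha.not_ge (nonpos_of_forall_rpow_mul_le (E := E) hp fun c hc => ?_)
    simpa [hb0] using h c hc
  have hE_pos : 0 < E := by
    refine hE.lt_of_ne' fun hE0 =>
      ha.not_ge (nonpos_of_forall_rpow_mul_le_rpow_mul (b := b) hp hpq fun c hc => ?_)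
    linarith [h c hc]
  set X := q * E / (q - p)
  set Y := q * b / p
  have hX : 0 < X := by positivity
  have hY : 0 < Y := by positivity
  -- the maximiser `c` has `c ^ q = X / Y`
  set c := (X / Y) ^ q⁻¹
  have hcq : c ^ q = X / Y := rpow_inv_rpow (by positivity) hq.ne'
  have hcp : c ^ p = X ^ (p / q) / Y ^ (p / q) := by
    rw [← rpow_mul (by positivity), div_rpow hX.le hY.le, inv_mul_eq_div]
  have hXsplit : X = X ^ (p / q) * X ^ ((q - p) / q) := by
    rw [← rpow_add hX, ← add_div, add_sub_cancel, div_self hq.ne', rpow_one]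
  have hmax := h c (by positivity)
  rw [hcq, hcp, show X / Y * b = X - E by simp only [X, Y]; field_simp; ring] at hmax
  have hXp : 0 < X ^ (p / q) := by positivity
  have hYp : 0 < Y ^ (p / q) := by positivity
  rw [← mul_le_mul_iff_right₀ hXp]
  calc X ^ (p / q) * a = X ^ (p / q) / Y ^ (p / q) * a * Y ^ (p / q) := by field_simp
    _ ≤ X * Y ^ (p / q) := by gcongr; linarith
    _ = _ := by rw [← mul_assoc, ← hXsplit]

theorem rpow_le_weighted_add_of_le_rpow_mul_rpow {X Y r u v w s : ℝ} (ha : 0 ≤ a) (hX : 0 ≤ X)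
    (hY : 0 ≤ Y) (hr : 0 ≤ r) (hw0 : 0 ≤ w) (hw1 : w ≤ 1) (hu : r * u = w * s)
    (hv : r * v = 1 - w) (h : a ≤ X ^ u * Y ^ v) :
    a ^ r ≤ w * X ^ s + (1 - w) * Y :=
  calc a ^ r ≤ (X ^ u * Y ^ v) ^ r := rpow_le_rpow ha h hr
    _ = (X ^ s) ^ w * Y ^ (1 - w) := by
      rw [mul_rpow (by positivity) (by positivity), ← rpow_mul hX, ← rpow_mul hX, ← rpow_mul hY,
        mul_comm u, hu, mul_comm s, mul_comm v, hv]
    _ ≤ w * X ^ s + (1 - w) * Y :=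
      geom_mean_le_arith_mean2_weighted hw0 (by linarith) (by positivity) hY (by ring)

end Real

namespace Hartree

/-- `M(γ) = mOfEnergy α (E_H(γ))`. -/
noncomputable def mOfEnergy (α E : ℝ) : ℝ :=
  ((4 - α) / 4) * (2 * E / (2 - α)) ^ ((2 - α) / (4 - α))

/-- The inverse of `mOfEnergy α` on `[0, ∞)`. -/
noncomputable def energyOfM (α M : ℝ) : ℝ :=
  ((2 - α) / 2) * (4 * M / (4 - α)) ^ ((4 - α) / (2 - α))

section Profiles

variable {α A B E M : ℝ}

theorem mOfEnergy_nonneg (hα2 : α < 2) (hE : 0 ≤ E) : 0 ≤ mOfEnergy α E :=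
  mul_nonneg (by linarith) (rpow_nonneg (div_nonneg (by linarith) (by linarith)) _)

theorem energyOfM_nonneg (hα2 : α < 2) (hM : 0 ≤ M) : 0 ≤ energyOfM α M :=
  mul_nonneg (by linarith) (rpow_nonneg (div_nonneg (by linarith) (by linarith)) _)

theorem mOfEnergy_le_of_le_energyOfM (hα2 : α < 2) (hE : 0 ≤ E) (hM : 0 ≤ M)
    (h : E ≤ energyOfM α M) : mOfEnergy α E ≤ M := by
  have h2 : 0 < 2 - α := by linarith
  have h4 : 0 < 4 - α := by linarith
  have hbase : 2 * E / (2 - α) ≤ (4 * M / (4 - α)) ^ ((4 - α) / (2 - α)) := by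
    rw [div_le_iff₀ h2]; unfold energyOfM at h; linarith
  calc mOfEnergy α E
      ≤ (4 - α) / 4 * ((4 * M / (4 - α)) ^ ((4 - α) / (2 - α))) ^ ((2 - α) / (4 - α)) := by
        unfold mOfEnergy; gcongr
    _ = M := by
      rw [← rpow_mul (by positivity),
        show (4 - α) / (2 - α) * ((2 - α) / (4 - α)) = 1 by field_simp, rpow_one]
      field_simp

theorem rpow_half_sub_le_mOfEnergy (hα0 : 0 < α) (hα2 : α < 2) (hA : 0 ≤ A) (hB : 0 ≤ B)
    (h : ∀ c > 0, c ^ α * A - c ^ (2 : ℝ) * B ≤ E) :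
    A ^ ((1 : ℝ) / 2) - 1 / 2 * B ≤ mOfEnergy α E := by
  have hE := nonneg_of_forall_rpow_mul_sub_le hα0 two_pos h
  have hα4 : 4 - α ≠ 0 := by linarith
  have := rpow_le_weighted_add_of_le_rpow_mul_rpow (r := 1 / 2) (w := (4 - α) / 4)
    (s := (2 - α) / (4 - α)) hA (div_nonneg (by positivity) (by linarith)) (by positivity)
    (by norm_num) (by linarith) (by linarith) (by field_simp; ring) (by ring)
    (le_of_forall_rpow_mul_sub_rpow_mul_le hα0 hα2 hB h)
  rw [show (1 - (4 - α) / 4) * (2 * B / α) = 1 / 2 * B by field_simp; ring] at this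
  unfold mOfEnergy
  linarith

theorem sub_le_energyOfM (hα0 : 0 < α) (hα2 : α < 2) (hA : 0 ≤ A) (hB : 0 ≤ B)
    (h : ∀ c > 0, c ^ (α / 2) * A ^ ((1 : ℝ) / 2) - c ^ (2 : ℝ) * (B / 2) ≤ M) :
    A - B ≤ energyOfM α M := by
  have hM := nonneg_of_forall_rpow_mul_sub_le (by positivity) two_pos h
  have hα2' : 2 - α ≠ 0 := by linarith
  have hα4 : 4 - α ≠ 0 := by linarith
  have := rpow_le_weighted_add_of_le_rpow_mul_rpow (r := 2) (w := (2 - α) / 2)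
    (s := (4 - α) / (2 - α)) (rpow_nonneg hA _) (div_nonneg (by positivity) (by linarith))
    (by positivity) (by norm_num) (by linarith) (by linarith) (by field_simp; ring) (by ring)
    (le_of_forall_rpow_mul_sub_rpow_mul_le (by positivity) (by linarith) (by positivity) h)
  rw [← rpow_mul hA, one_div_mul_cancel two_ne_zero, rpow_one,
    show 2 * M / (2 - α / 2) = 4 * M / (4 - α) by rw [div_eq_div_iff (by linarith) hα4]; ring,
    show (1 - (2 - α) / 2) * (2 * (B / 2) / (α / 2)) = B by field_simp; ring] at this
  unfold energyOfM
  linarith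

end Profiles

section ScalingFamily

variable {ι : Type*} {α E M : ℝ} {A B : ι → ℝ}

/-- `A` and `B` scale like the interaction and kinetic energies under dilations. -/
def IsScalingClosed (α : ℝ) (A B : ι → ℝ) : Prop :=
  ∀ i, ∀ c > 0, ∃ j, A j = c ^ α * A i ∧ B j = c ^ 2 * B i

theorem IsScalingClosed.forall_rpow_mul_sub_le (hs : IsScalingClosed α A B)
    (h : ∀ i, A i - B i ≤ E) (i : ι) : ∀ c > 0, c ^ α * A i - c ^ (2 : ℝ) * B i ≤ E := by
  intro c hc
  obtain ⟨j, hAj, hBj⟩ := hs i c hc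
  rw [rpow_two, ← hAj, ← hBj]
  exact h j

theorem IsScalingClosed.forall_rpow_mul_rpow_half_sub_le (hs : IsScalingClosed α A B)
    (hA : ∀ i, 0 ≤ A i) (h : ∀ i, A i ^ ((1 : ℝ) / 2) - 1 / 2 * B i ≤ M) (i : ι) :
    ∀ c > 0, c ^ (α / 2) * A i ^ ((1 : ℝ) / 2) - c ^ (2 : ℝ) * (B i / 2) ≤ M := by
  intro c hc
  obtain ⟨j, hAj, hBj⟩ := hs i c hc
  calc c ^ (α / 2) * A i ^ ((1 : ℝ) / 2) - c ^ (2 : ℝ) * (B i / 2)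
      = A j ^ ((1 : ℝ) / 2) - 1 / 2 * B j := by
        rw [hAj, hBj, mul_rpow (rpow_nonneg hc.le _) (hA i), ← rpow_mul hc.le, rpow_two]
        ring_nf
    _ ≤ M := h j

theorem iSup_nonneg_of_forall_le_imp_nonneg {f : ι → ℝ} (hf : BddAbove (range f))
    (h : ∀ s, (∀ i, f i ≤ s) → ι → 0 ≤ s) : 0 ≤ ⨆ i, f i := by
  rcases isEmpty_or_nonempty ι with hι | ⟨⟨i⟩⟩
  · simp
  · exact h _ (le_ciSup hf) i

theorem IsScalingClosed.bddAbove_range_sub_iff (hs : IsScalingClosed α A B) (hα0 : 0 < α)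
    (hα2 : α < 2) (hA : ∀ i, 0 ≤ A i) (hB : ∀ i, 0 ≤ B i) :
    BddAbove (range fun i => A i - B i) ↔
      BddAbove (range fun i => A i ^ ((1 : ℝ) / 2) - 1 / 2 * B i) := by
  constructor
  · rintro ⟨E, hE⟩
    refine ⟨mOfEnergy α E, forall_mem_range.2 fun i => ?_⟩
    exact rpow_half_sub_le_mOfEnergy hα0 hα2 (hA i) (hB i)
      (hs.forall_rpow_mul_sub_le (forall_mem_range.1 hE) i)
  · rintro ⟨M, hM⟩
    refine ⟨energyOfM α M, forall_mem_range.2 fun i => ?_⟩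
    exact sub_le_energyOfM hα0 hα2 (hA i) (hB i)
      (hs.forall_rpow_mul_rpow_half_sub_le hA (forall_mem_range.1 hM) i)

theorem IsScalingClosed.iSup_rpow_half_sub_eq (hs : IsScalingClosed α A B) (hα0 : 0 < α)
    (hα2 : α < 2) (hA : ∀ i, 0 ≤ A i) (hB : ∀ i, 0 ≤ B i)
    (hbdd : BddAbove (range fun i => A i - B i)) :
    ⨆ i, (A i ^ ((1 : ℝ) / 2) - 1 / 2 * B i) = mOfEnergy α (⨆ i, (A i - B i)) := by
  have hbddM := (hs.bddAbove_range_sub_iff hα0 hα2 hA hB).1 hbdd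
  have hE : 0 ≤ ⨆ i, (A i - B i) := iSup_nonneg_of_forall_le_imp_nonneg hbdd fun _ h i =>
    nonneg_of_forall_rpow_mul_sub_le hα0 two_pos (hs.forall_rpow_mul_sub_le h i)
  have hM : 0 ≤ ⨆ i, (A i ^ ((1 : ℝ) / 2) - 1 / 2 * B i) :=
    iSup_nonneg_of_forall_le_imp_nonneg hbddM fun _ h i => nonneg_of_forall_rpow_mul_sub_le
      (by positivity) two_pos (hs.forall_rpow_mul_rpow_half_sub_le hA h i)
  refine le_antisymm (Real.iSup_le (fun i => ?_) (mOfEnergy_nonneg hα2 hE))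
    (mOfEnergy_le_of_le_energyOfM hα2 hE hM
      (Real.iSup_le (fun i => ?_) (energyOfM_nonneg hα2 hM)))
  · exact rpow_half_sub_le_mOfEnergy hα0 hα2 (hA i) (hB i)
      (hs.forall_rpow_mul_sub_le (le_ciSup hbdd) i)
  · exact sub_le_energyOfM hα0 hα2 (hA i) (hB i)
      (hs.forall_rpow_mul_rpow_half_sub_le hA (le_ciSup hbddM) i)

end ScalingFamily

section Energies

variable {V : Type*} [NormedAddCommGroup V] [MeasurableSpace V] (μ : Measure V)

noncomputable def interactionEnergy (γ g : V → ℝ) : ℝ :=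
  ∫ x, ∫ y, γ (x - y) * g x ^ 2 * g y ^ 2 ∂μ ∂μ

theorem interactionEnergy_nonneg {γ g : V → ℝ} (hγ : ∀ x, 0 ≤ γ x) :
    0 ≤ interactionEnergy μ γ g :=
  integral_nonneg fun x => integral_nonneg fun y => by have := hγ (x - y); positivity

variable [NormedSpace ℝ V]

noncomputable def kineticEnergy (g : V → ℝ) : ℝ :=
  ∫ x, ‖fderiv ℝ g x‖ ^ 2 ∂μ

theorem kineticEnergy_nonneg {g : V → ℝ} : 0 ≤ kineticEnergy μ g :=
  integral_nonneg fun x => by positivity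

/-- The set `G` of the theorem, with `W^{1,2}` modelled by differentiable functions. -/
def IsAdmissible (g : V → ℝ) : Prop :=
  Differentiable ℝ g ∧ MemLp g 2 μ ∧ ∫ x, g x ^ 2 ∂μ = 1 ∧
    Integrable (fun x => ‖fderiv ℝ g x‖ ^ 2) μ

end Energies

section Dilation

variable {V : Type*} [NormedAddCommGroup V] [NormedSpace ℝ V] {c : ℝ} {g : V → ℝ}

/-- The factor `√(c ^ d)` makes `dilate c` an isometry of `L²`. -/
noncomputable def dilate (c : ℝ) (g : V → ℝ) (x : V) : ℝ :=
  √(c ^ finrank ℝ V) * g (c • x)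

theorem sq_dilate (hc : 0 ≤ c) (x : V) : dilate c g x ^ 2 = c ^ finrank ℝ V * g (c • x) ^ 2 := by
  rw [dilate, mul_pow, sq_sqrt (pow_nonneg hc _)]

theorem hasFDerivAt_dilate {x : V} (hg : DifferentiableAt ℝ g (c • x)) :
    HasFDerivAt (dilate c g) ((√(c ^ finrank ℝ V) * c) • fderiv ℝ g (c • x)) x := by
  have := (hg.hasFDerivAt.comp x ((hasFDerivAt_id x).const_smul c)).const_mul √(c ^ finrank ℝ V)
  rwa [ContinuousLinearMap.comp_smul, ContinuousLinearMap.comp_id, smul_smul] at this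

theorem norm_fderiv_dilate_sq (hg : Differentiable ℝ g) (hc : 0 ≤ c) (x : V) :
    ‖fderiv ℝ (dilate c g) x‖ ^ 2 = c ^ finrank ℝ V * c ^ 2 * ‖fderiv ℝ g (c • x)‖ ^ 2 := by
  rw [(hasFDerivAt_dilate (hg _)).fderiv, norm_smul, Real.norm_eq_abs, mul_pow, sq_abs, mul_pow,
    sq_sqrt (pow_nonneg hc _)]

variable [FiniteDimensional ℝ V] [MeasurableSpace V] [BorelSpace V] {μ : Measure V}
  [μ.IsAddHaarMeasure]

theorem _root_.MeasureTheory.MemLp.comp_smul {F : Type*} [NormedAddCommGroup F] {p : ℝ≥0∞}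
    {f : V → F} (hf : MemLp f p μ) (hc : c ≠ 0) : MemLp (fun x => f (c • x)) p μ := by
  let t := (Homeomorph.smul (isUnit_iff_ne_zero.2 hc).unit : V ≃ₜ V).toMeasurableEquiv
  refine (MeasurableEquiv.memLp_map_measure_iff t).1 ?_
  rw [show ⇑t = (c • ·) from rfl, Measure.map_addHaar_smul μ hc]
  exact hf.smul_measure ENNReal.ofReal_ne_top

theorem integral_integral_comp_smul {G : Type*} [NormedAddCommGroup G] [NormedSpace ℝ G]
    (F : V → V → G) (hc : 0 ≤ c) :
    ∫ x, ∫ y, F (c • x) (c • y) ∂μ ∂μ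
      = ((c ^ finrank ℝ V)⁻¹ * (c ^ finrank ℝ V)⁻¹) • ∫ x, ∫ y, F x y ∂μ ∂μ := by
  calc ∫ x, ∫ y, F (c • x) (c • y) ∂μ ∂μ
      = ∫ x, (c ^ finrank ℝ V)⁻¹ • ∫ y, F (c • x) y ∂μ ∂μ := by
        congr 1 with x
        exact Measure.integral_comp_smul_of_nonneg μ (F (c • x)) c (hR := hc)
    _ = _ := by
      rw [integral_smul,
        Measure.integral_comp_smul_of_nonneg μ (fun x => ∫ y, F x y ∂μ) c (hR := hc), smul_smul]

theorem integral_sq_dilate (hc : 0 < c) : ∫ x, dilate c g x ^ 2 ∂μ = ∫ x, g x ^ 2 ∂μ := by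
  simp_rw [sq_dilate hc.le]
  rw [integral_const_mul,
    Measure.integral_comp_smul_of_nonneg μ (fun x => g x ^ 2) c (hR := hc.le), smul_eq_mul,
    mul_inv_cancel_left₀ (pow_pos hc _).ne']

theorem interactionEnergy_dilate {γ : V → ℝ} {α : ℝ} (hγ : ∀ x, γ (c • x) = c ^ (-α) * γ x)
    (hc : 0 < c) : interactionEnergy μ γ (dilate c g) = c ^ α * interactionEnergy μ γ g := by
  set n := finrank ℝ V
  have hγ' : ∀ x y : V, γ (x - y) = c ^ α * γ (c • x - c • y) := fun x y => by
    rw [← smul_sub, hγ, ← mul_assoc, ← rpow_add hc, add_neg_cancel, rpow_zero, one_mul]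
  calc interactionEnergy μ γ (dilate c g)
      = ∫ x, ∫ y, (fun u v => (c ^ n * c ^ n * c ^ α) * (γ (u - v) * g u ^ 2 * g v ^ 2))
          (c • x) (c • y) ∂μ ∂μ := by
        unfold interactionEnergy
        congr 1 with x
        congr 1 with y
        rw [hγ' x y, sq_dilate hc.le, sq_dilate hc.le]
        ring
    _ = ((c ^ n)⁻¹ * (c ^ n)⁻¹) • ∫ x, ∫ y, (c ^ n * c ^ n * c ^ α) *
          (γ (x - y) * g x ^ 2 * g y ^ 2) ∂μ ∂μ :=
        integral_integral_comp_smul (fun u v => (c ^ n * c ^ n * c ^ α) *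
          (γ (u - v) * g u ^ 2 * g v ^ 2)) hc.le
    _ = c ^ α * interactionEnergy μ γ g := by
      simp only [integral_const_mul, smul_eq_mul, interactionEnergy, mul_assoc]
      field_simp

theorem kineticEnergy_dilate (hg : Differentiable ℝ g) (hc : 0 < c) :
    kineticEnergy μ (dilate c g) = c ^ 2 * kineticEnergy μ g := by
  simp only [kineticEnergy, norm_fderiv_dilate_sq hg hc.le, integral_const_mul]
  rw [Measure.integral_comp_smul_of_nonneg μ (fun x => ‖fderiv ℝ g x‖ ^ 2) c (hR := hc.le),
    smul_eq_mul]
  field_simp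

theorem IsAdmissible.dilate (hg : IsAdmissible μ g) (hc : 0 < c) :
    IsAdmissible μ (dilate c g) := by
  obtain ⟨hdiff, hL2, hnorm, hgrad⟩ := hg
  refine ⟨fun x => (hasFDerivAt_dilate (hdiff _)).differentiableAt,
    (hL2.comp_smul hc.ne').const_mul _, (integral_sq_dilate hc).trans hnorm, ?_⟩
  simp_rw [norm_fderiv_dilate_sq hdiff hc.le]
  exact (hgrad.comp_smul hc.ne').const_mul _

theorem isScalingClosed_interactionEnergy_kineticEnergy {γ : V → ℝ} {α : ℝ}
    (hγ : ∀ c > (0 : ℝ), ∀ x, γ (c • x) = c ^ (-α) * γ x) :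
    IsScalingClosed α (fun g : {g // IsAdmissible μ g} => interactionEnergy μ γ g.1)
      (fun g => kineticEnergy μ g.1) := fun g c hc =>
  ⟨⟨dilate c g, g.2.dilate hc⟩, interactionEnergy_dilate (hγ c hc) hc,
    kineticEnergy_dilate g.2.1 hc⟩

end Dilation

end Hartree

open Hartree in
/-- For `(−α)`-homogeneous `γ`, the Hartree energy `E_H(γ)` is finite iff `M(γ)` is finite,
and in that case `M(γ) = ((4−α)/4)(2E_H(γ)/(2−α))^{(2−α)/(4−α)}`, where both quantities are
suprema over the unit sphere `G` of `W^{1,2}(ℝ^ℓ)`. -/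
theorem stmt9 {ℓ : ℕ} (α : ℝ) (hα : α ∈ Ioo (0:ℝ) 2)
    (γ : EuclideanSpace ℝ (Fin ℓ) → ℝ) (hγ0 : ∀ x, 0 ≤ γ x)
    (hscal : ∀ c > (0:ℝ), ∀ x, γ (c • x) = c ^ (-α) * γ x)
    (SE SM : Set ℝ)
    (hSE : SE = {r : ℝ | ∃ g : EuclideanSpace ℝ (Fin ℓ) → ℝ, Differentiable ℝ g ∧
      MemLp g 2 volume ∧ (∫ x, (g x) ^ 2) = 1 ∧
      Integrable (fun x => ‖fderiv ℝ g x‖ ^ 2) ∧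
      r = (∫ x, ∫ y, γ (x - y) * (g x) ^ 2 * (g y) ^ 2) - (∫ x, ‖fderiv ℝ g x‖ ^ 2)})
    (hSM : SM = {r : ℝ | ∃ g : EuclideanSpace ℝ (Fin ℓ) → ℝ, Differentiable ℝ g ∧
      MemLp g 2 volume ∧ (∫ x, (g x) ^ 2) = 1 ∧
      Integrable (fun x => ‖fderiv ℝ g x‖ ^ 2) ∧
      r = (∫ x, ∫ y, γ (x - y) * (g x) ^ 2 * (g y) ^ 2) ^ ((1:ℝ)/2)
            - (1/2) * (∫ x, ‖fderiv ℝ g x‖ ^ 2)}) :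
    (BddAbove SE ↔ BddAbove SM)
    ∧ (BddAbove SE →
        sSup SM = ((4-α)/4) * (2 * sSup SE / (2-α)) ^ ((2-α)/(4-α))) := by
  have hSE' : SE = range fun g : {g // IsAdmissible volume g} =>
      interactionEnergy volume γ g.1 - kineticEnergy volume g.1 := by
    ext r
    simp [hSE, IsAdmissible, interactionEnergy, kineticEnergy, eq_comm, and_assoc]
  have hSM' : SM = range fun g : {g // IsAdmissible volume g} =>
      interactionEnergy volume γ g.1 ^ ((1:ℝ)/2) - 1 / 2 * kineticEnergy volume g.1 := by
    ext r
    simp [hSM, IsAdmissible, interactionEnergy, kineticEnergy, eq_comm, and_assoc]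
  have hs := isScalingClosed_interactionEnergy_kineticEnergy (μ := volume) hscal
  rw [hSE', hSM']
  exact ⟨hs.bddAbove_range_sub_iff hα.1 hα.2 (fun _ => interactionEnergy_nonneg _ hγ0)
      (fun _ => kineticEnergy_nonneg _),
    hs.iSup_rpow_half_sub_eq hα.1 hα.2 (fun _ => interactionEnergy_nonneg _ hγ0)
      (fun _ => kineticEnergy_nonneg _)⟩
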